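/- arXiv:2306.04929 — 3 statements merged into one kernel-verified Lean document; each statement's English description precedes it below -/
import Mathlib

section
/- Let A, B, C : ℝ → ℝ be twice continuously differentiable, let tₙ ∈ ℝ, let q : ℝ → ℝ satisfy q′(t) = A(q(t)) + B(q(t)) + C(q(t)) for all t. Let q_A : ℝ → ℝ satisfy q_A′(s) = A(q_A(s)) with q_A(0) = q(tₙ), and let q_B and q_C : ℝ → ℝ → ℝ be the two-parameter flows of B and C respectively (for every φ, ∂_s q_B(s, φ) = B(q_B(s, φ)), q_B(0, φ) = φ, and likewise for q_C), with sufficient smoothness near the relevant points. Then the original (fully sequential) scheme's local truncation error attributable to process C, lte_C^{Ori}(Δt) = ∫₀^{Δt} C(q_C(η, q_B(Δt, q_A(Δt)))) dη − ∫₀^{Δt} C(q(tₙ+η)) dη, satisfies lte_C^{Ori}(Δt) = (Δt²/2)·C′(q(tₙ))·(A(q(tₙ)) + B(q(tₙ))) + O(Δt³) as Δt → 0. -/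
/-!
Write `w t = q_B(t, q_A t)` and `c = C′(q tₙ) (A + B)(q tₙ)`. The integrand difference
`g(η, t) = C(q_C(η, w t)) − C(q(tₙ + η))` is `C²` near the origin and vanishes there. Its partial
derivative in `η` at the origin is `C′·C − C′·(A + B + C) = −c`, and in `t` it is `C′ · w′(0) = c`,
because a flow starts as the identity so that `w′(0) = B + A`. A second-order Taylor bound on the
triangle `{(η, t) : η between 0 and t}` therefore gives
`∫₀ᵗ g(η, t) dη = ∫₀ᵗ c (t − η) dη + O(t³) = c t²/2 + O(t³)`.
-/

open Filter Asymptotics Set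
open scoped Topology

theorem contDiff_succ_of_hasDerivAt {E : Type*} [NormedAddCommGroup E] [NormedSpace ℝ E]
    {F : E → E} {q : ℝ → E} {n : ℕ} (hF : ContDiff ℝ n F) (hq : ∀ t, HasDerivAt q (F (q t)) t) :
    ContDiff ℝ (n + 1) q := by
  have hdiff : Differentiable ℝ q := fun t => (hq t).differentiableAt
  have hderiv : deriv q = F ∘ q := funext fun t => (hq t).deriv
  induction n with
  | zero =>
    exact contDiff_succ_iff_deriv.mpr
      ⟨hdiff, by simp, hderiv ▸ hF.comp (contDiff_zero.mpr hdiff.continuous)⟩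
  | succ n ih =>
    have hqn : ContDiff ℝ (n + 1) q := ih (hF.of_le (by norm_cast; omega))
    exact contDiff_succ_iff_deriv.mpr ⟨hdiff, by simp, hderiv ▸ hF.comp (by exact_mod_cast hqn)⟩

theorem ContDiffAt.isBigO_sub_sub_fderiv {E F : Type*} [NormedAddCommGroup E] [NormedSpace ℝ E]
    [NormedAddCommGroup F] [NormedSpace ℝ F] {f : E → F} {x : E} (hf : ContDiffAt ℝ 2 f x) :
    (fun y => f y - f x - fderiv ℝ f x (y - x)) =O[𝓝 x] fun y => ‖y - x‖ ^ 2 := by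
  obtain ⟨K, t, ht, hlip⟩ := (hf.fderiv_right one_add_one_eq_two.le).exists_lipschitzOnWith
  have hdiff : ∀ᶠ y in 𝓝 x, DifferentiableAt ℝ f y :=
    (hf.eventually (by simp)).mono fun y hy => hy.differentiableAt two_ne_zero
  obtain ⟨ε, hε, hball⟩ := Metric.mem_nhds_iff.mp (inter_mem ht hdiff)
  refine IsBigO.of_bound K ?_
  filter_upwards [Metric.ball_mem_nhds x hε] with y hy
  set r := ‖y - x‖
  have hsub : Metric.closedBall x r ⊆ Metric.ball x ε :=
    Metric.closedBall_subset_ball (by rwa [Metric.mem_ball, dist_eq_norm] at hy)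
  have hbound : ∀ z ∈ Metric.closedBall x r, ‖fderiv ℝ f z - fderiv ℝ f x‖ ≤ K * r :=
    fun z hz => by
      rw [← dist_eq_norm]
      exact (hlip.dist_le_mul z (hball (hsub hz)).1 x (hball (Metric.mem_ball_self hε)).1).trans
        (by gcongr; exact hz)
  have := (convex_closedBall x r).norm_image_sub_le_of_norm_fderiv_le'
    (fun z hz => (hball (hsub hz)).2) hbound (Metric.mem_closedBall_self (norm_nonneg _))
    (by rw [Metric.mem_closedBall, dist_eq_norm])
  simpa [sq, mul_assoc] using this

theorem norm_prodMk_of_mem_uIcc {η t : ℝ} (h : η ∈ uIcc 0 t) : ‖(η, t)‖ = ‖t‖ := by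
  have := abs_sub_left_of_mem_uIcc h
  simp only [sub_zero] at this
  simp [Prod.norm_def, this]

theorem isBigO_integral_prodMk_of_isBigO_norm_sq {E : Type*} [NormedAddCommGroup E]
    [NormedSpace ℝ E] {h : ℝ × ℝ → E} (hh : h =O[𝓝 0] fun p => ‖p‖ ^ 2) :
    (fun t => ∫ η in (0:ℝ)..t, h (η, t)) =O[𝓝 0] fun t => t ^ 3 := by
  obtain ⟨K, hK⟩ := hh.bound
  obtain ⟨ε, hε, hball⟩ := Metric.mem_nhds_iff.mp hK
  refine IsBigO.of_bound K ?_
  filter_upwards [Metric.ball_mem_nhds (0:ℝ) hε] with t ht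
  have hbound : ∀ η ∈ uIoc 0 t, ‖h (η, t)‖ ≤ K * ‖t‖ ^ 2 := fun η hη => by
    have hnorm := norm_prodMk_of_mem_uIcc (uIoc_subset_uIcc hη)
    have : (η, t) ∈ Metric.ball (0 : ℝ × ℝ) ε := by
      rwa [mem_ball_zero_iff, hnorm, ← mem_ball_zero_iff]
    simpa [hnorm] using hball this
  calc ‖∫ η in (0:ℝ)..t, h (η, t)‖ ≤ K * ‖t‖ ^ 2 * |t - 0| :=
        intervalIntegral.norm_integral_le_of_norm_le_const hbound
    _ = K * ‖t ^ 3‖ := by rw [norm_pow, Real.norm_eq_abs, sub_zero]; ring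

theorem eventually_intervalIntegrable_prodMk {E : Type*} [NormedAddCommGroup E]
    {f : ℝ × ℝ → E} (hf : ∀ᶠ p in 𝓝 0, ContinuousAt f p) :
    ∀ᶠ t in 𝓝 (0:ℝ), IntervalIntegrable (fun η => f (η, t)) MeasureTheory.volume 0 t := by
  obtain ⟨ε, hε, hball⟩ := Metric.mem_nhds_iff.mp hf
  filter_upwards [Metric.ball_mem_nhds (0:ℝ) hε] with t ht
  refine ContinuousOn.intervalIntegrable fun η hη => ContinuousAt.continuousWithinAt ?_
  have : (η, t) ∈ Metric.ball (0 : ℝ × ℝ) ε := by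
    rwa [mem_ball_zero_iff, norm_prodMk_of_mem_uIcc hη, ← mem_ball_zero_iff]
  exact ContinuousAt.comp₂ (f := f) (hball this) continuousAt_id continuousAt_const

theorem fderiv_prod_apply_of_hasDerivAt {F : Type*} [NormedAddCommGroup F] [NormedSpace ℝ F]
    {f : ℝ × ℝ → F} {x y : ℝ} {a b : F} (hf : DifferentiableAt ℝ f (x, y))
    (ha : HasDerivAt (fun s => f (s, y)) a x) (hb : HasDerivAt (fun s => f (x, s)) b y)
    (v : ℝ × ℝ) : fderiv ℝ f (x, y) v = v.1 • a + v.2 • b := by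
  have h₁ : fderiv ℝ f (x, y) (1, 0) = a :=
    (hf.hasFDerivAt.comp_hasDerivAt x ((hasDerivAt_id x).prodMk (hasDerivAt_const x y))).unique ha
  have h₂ : fderiv ℝ f (x, y) (0, 1) = b :=
    (hf.hasFDerivAt.comp_hasDerivAt y ((hasDerivAt_const y x).prodMk (hasDerivAt_id y))).unique hb
  rw [← h₁, ← h₂, ← map_smul, ← map_smul, ← map_add]
  congr 1
  ext <;> simp

theorem hasDerivAt_flow_comp {Φ : ℝ → ℝ → ℝ} {a : ℝ → ℝ} {v a' : ℝ}
    (hΦ : HasDerivAt (fun u => Φ u (a 0)) v 0) (hΦ0 : ∀ φ, Φ 0 φ = φ)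
    (hd : DifferentiableAt ℝ (fun p : ℝ × ℝ => Φ p.1 p.2) (0, a 0)) (ha : HasDerivAt a a' 0) :
    HasDerivAt (fun t => Φ t (a t)) (v + a') 0 := by
  have hid : HasDerivAt (Φ 0) 1 (a 0) := by
    simpa [show Φ 0 = id from funext hΦ0] using hasDerivAt_id (a 0)
  have := hd.hasFDerivAt.comp_hasDerivAt 0 ((hasDerivAt_id 0).prodMk ha)
  rwa [fderiv_prod_apply_of_hasDerivAt hd hΦ hid, one_smul, smul_eq_mul, mul_one] at this

theorem contDiffAt_sequential_comp {n : WithTop ℕ∞} {f g : ℝ → ℝ → ℝ} {a : ℝ → ℝ}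
    (ha : ContDiffAt ℝ n a 0) (hg : ContDiffAt ℝ n (fun p : ℝ × ℝ => g p.1 p.2) (0, a 0))
    (hf : ContDiffAt ℝ n (fun p : ℝ × ℝ => f p.1 p.2) (0, g 0 (a 0))) :
    ContDiffAt ℝ n (fun p : ℝ × ℝ => f p.1 (g p.2 (a p.2))) 0 := by
  have hga : ContDiffAt ℝ n (fun t => g t (a t)) 0 :=
    hg.comp (g := fun p : ℝ × ℝ => g p.1 p.2) (0 : ℝ) (contDiffAt_id.prodMk ha)
  have hpair : ContDiffAt ℝ n (fun p : ℝ × ℝ => (p.1, g p.2 (a p.2))) 0 :=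
    contDiffAt_fst.prodMk (hga.comp (0 : ℝ × ℝ) contDiffAt_snd)
  exact hf.comp (g := fun p : ℝ × ℝ => f p.1 p.2) (0 : ℝ × ℝ) hpair

theorem isBigO_integral_sub_of_contDiffAt {E : Type*} [NormedAddCommGroup E] [NormedSpace ℝ E]
    [CompleteSpace E] {g : ℝ × ℝ → E} {a b : E} (hg : ContDiffAt ℝ 2 g 0) (hg0 : g 0 = 0)
    (ha : HasDerivAt (fun s => g (s, 0)) a 0) (hb : HasDerivAt (fun s => g (0, s)) b 0) :
    (fun t => (∫ η in (0:ℝ)..t, g (η, t)) - t ^ 2 • ((2:ℝ)⁻¹ • a + b)) =O[𝓝 0]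
      fun t => t ^ 3 := by
  have hlin : ∀ t : ℝ, ∫ η in (0:ℝ)..t, (η • a + t • b) = t ^ 2 • ((2:ℝ)⁻¹ • a + b) := by
    intro t
    rw [intervalIntegral.integral_add (Continuous.intervalIntegrable (by fun_prop) _ _)
      (Continuous.intervalIntegrable (by fun_prop) _ _),
      intervalIntegral.integral_smul_const, integral_id, intervalIntegral.integral_const]
    module
  have htaylor : (fun p : ℝ × ℝ => g p - (p.1 • a + p.2 • b)) =O[𝓝 0] fun p => ‖p‖ ^ 2 := by
    have hDg : ∀ v, fderiv ℝ g 0 v = v.1 • a + v.2 • b :=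
      fderiv_prod_apply_of_hasDerivAt (x := 0) (y := 0) (hg.differentiableAt two_ne_zero) ha hb
    simpa [hg0, hDg] using hg.isBigO_sub_sub_fderiv
  refine (isBigO_integral_prodMk_of_isBigO_norm_sq htaylor).congr' ?_ EventuallyEq.rfl
  filter_upwards [eventually_intervalIntegrable_prodMk
    ((hg.eventually (by simp)).mono fun _ h => h.continuousAt)] with t ht
  rw [intervalIntegral.integral_sub ht (Continuous.intervalIntegrable (by fun_prop) _ _), hlin]

theorem lte_C_original_three_process
    (A B C q qA : ℝ → ℝ) (qB qC : ℝ → ℝ → ℝ) (tn : ℝ)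
    (hA : ContDiff ℝ 2 A) (hB : ContDiff ℝ 2 B) (hC : ContDiff ℝ 2 C)
    (hq : ∀ t, HasDerivAt q (A (q t) + B (q t) + C (q t)) t)
    (hqA : ∀ s, HasDerivAt qA (A (qA s)) s)
    (hqA0 : qA 0 = q tn)
    (hqB : ∀ φ s, HasDerivAt (fun u => qB u φ) (B (qB s φ)) s)
    (hqB0 : ∀ φ, qB 0 φ = φ)
    (hqC : ∀ φ s, HasDerivAt (fun u => qC u φ) (C (qC s φ)) s)
    (hqC0 : ∀ φ, qC 0 φ = φ)
    (hqAsmooth : ContDiffAt ℝ 2 qA 0)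
    (hqBsmooth : ContDiffAt ℝ 2 (fun p : ℝ × ℝ => qB p.1 p.2) (0, q tn))
    (hqCsmooth : ContDiffAt ℝ 2 (fun p : ℝ × ℝ => qC p.1 p.2) (0, q tn)) :
    (fun Δt : ℝ =>
        ((∫ η in (0:ℝ)..Δt, C (qC η (qB Δt (qA Δt))))
            - ∫ η in (0:ℝ)..Δt, C (q (tn + η)))
          - Δt ^ 2 / 2 * (deriv C (q tn) * (A (q tn) + B (q tn))))
      =O[nhds (0:ℝ)] (fun Δt : ℝ => Δt ^ 3) := by
  have hq2 : ContDiff ℝ 2 q :=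
    contDiff_succ_of_hasDerivAt (n := 1) (((hA.add hB).add hC).of_le one_le_two) hq
  have hCd : ∀ y, HasDerivAt C (deriv C y) y :=
    fun y => ((hC.differentiable two_ne_zero) y).hasDerivAt
  rw [← hqA0] at hqBsmooth
  rw [← hqA0, ← hqB0 (qA 0)] at hqCsmooth
  have hw : HasDerivAt (fun t => qB t (qA t)) (B (q tn) + A (q tn)) 0 :=
    hasDerivAt_flow_comp (by simpa [hqA0, hqB0] using hqB (qA 0) 0) hqB0
      (hqBsmooth.differentiableAt two_ne_zero) (by simpa [hqA0] using hqA 0)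
  have hF : ContDiffAt ℝ 2 (fun p : ℝ × ℝ => C (qC p.1 (qB p.2 (qA p.2)))) 0 :=
    hC.contDiffAt.comp (0 : ℝ × ℝ) (contDiffAt_sequential_comp hqAsmooth hqBsmooth hqCsmooth)
  have hG : ContDiff ℝ 2 fun p : ℝ × ℝ => C (q (tn + p.1)) := by fun_prop
  have ha : HasDerivAt (fun s => C (qC s (qB 0 (qA 0))) - C (q (tn + s)))
      (deriv C (q tn) * C (q tn) - deriv C (q tn) * (A (q tn) + B (q tn) + C (q tn))) 0 := by
    refine (((hCd _).comp 0 (hqC _ 0)).sub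
      ((hCd _).comp 0 ((hq _).comp 0 ((hasDerivAt_id 0).const_add tn)))).congr_deriv ?_
    simp [hqA0, hqB0, hqC0]
  have hb : HasDerivAt (fun s => C (qC 0 (qB s (qA s))) - C (q (tn + 0)))
      (deriv C (q tn) * (B (q tn) + A (q tn))) 0 := by
    simp only [hqC0]
    exact ((hCd _).comp 0 hw).sub_const _ |>.congr_deriv (by simp [hqA0, hqB0])
  refine (isBigO_integral_sub_of_contDiffAt (hF.sub hG.contDiffAt) (by simp [hqA0, hqB0, hqC0])
    ha hb).congr' ?_ EventuallyEq.rfl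
  filter_upwards [eventually_intervalIntegrable_prodMk
    ((hF.eventually (by simp)).mono fun _ h => h.continuousAt)] with t ht
  rw [intervalIntegral.integral_sub ht (Continuous.intervalIntegrable (by fun_prop) _ _)]
  simp only [smul_eq_mul]
  ring
end

section
/- Let A, B, C : ℝ → ℝ be twice continuously differentiable, let tₙ ∈ ℝ, let q : ℝ → ℝ satisfy q′(t) = A(q(t)) + B(q(t)) + C(q(t)) for all t. Let q_A, q_B : ℝ → ℝ satisfy q_A′(s) = A(q_A(s)), q_B′(s) = B(q_B(s)) with q_A(0) = q_B(0) = q(tₙ), and let q_C : ℝ → ℝ → ℝ be the two-parameter flow of C (for every φ, ∂_s q_C(s, φ) = C(q_C(s, φ)) and q_C(0, φ) = φ), all with sufficient smoothness near the relevant points. Then the revised scheme's local truncation error attributable to process C, lte_C^{Rev}(Δt) = ∫₀^{Δt} C(q_C(η, q(tₙ) + (q_A(Δt) − q(tₙ)) + (q_B(Δt) − q(tₙ)))) dη − ∫₀^{Δt} C(q(tₙ+η)) dη, satisfies lte_C^{Rev}(Δt) = (Δt²/2)·C′(q(tₙ))·(A(q(tₙ)) + B(q(tₙ))) + O(Δt³)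 as Δt → 0. -/
/-!
Along the sector `|η| ≤ |Δt| → 0`, second-order Taylor expansions of the sub-flows give, up to
`O(Δt²)`, the revised input state `q(tₙ) + Δt (A + B)(q(tₙ))`, the value
`q(tₙ) + η C(q(tₙ)) + Δt (A + B)(q(tₙ))` of the C-flow started there, and the value
`q(tₙ) + η (A + B + C)(q(tₙ))` of the exact solution. The two arguments of `C` thus differ by
`(Δt - η) (A + B)(q(tₙ)) + O(Δt²)` and both lie within `O(Δt)` of `q(tₙ)`, so the integrands differ
by `C'(q(tₙ)) (Δt - η) (A + B)(q(tₙ)) + O(Δt²)`. Integrating over `[0, Δt]` yields the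
`Δt²/2` term up to `O(Δt³)`.
-/

open Filter Asymptotics Topology Metric Set MeasureTheory

section Taylor

variable {α E F : Type*} [NormedAddCommGroup E] [NormedSpace ℝ E]
  [NormedAddCommGroup F] [NormedSpace ℝ F] {f : E → F} {x₀ : E}

theorem ContDiffAt.isBigO_sub_sub_fderiv_s14 (hf : ContDiffAt ℝ 2 f x₀) :
    (fun p : E × E => f p.1 - f p.2 - fderiv ℝ f x₀ (p.1 - p.2)) =O[𝓝 (x₀, x₀)]
      fun p => ‖p - (x₀, x₀)‖ * ‖p.1 - p.2‖ := by
  obtain ⟨K, t, ht, hK⟩ := (hf.fderiv_right (m := 1) (by norm_num)).exists_lipschitzOnWith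
  have hd : ∀ᶠ z in 𝓝 x₀, DifferentiableAt ℝ f z :=
    (hf.eventually (by simp)).mono fun z hz => hz.differentiableAt (by norm_num)
  obtain ⟨ρ, hρ, hball⟩ := Metric.mem_nhds_iff.1 (inter_mem ht hd)
  refine .of_bound K ?_
  filter_upwards [ball_mem_nhds (x₀, x₀) hρ] with p hp
  set m := ‖p - (x₀, x₀)‖
  have hsub : closedBall x₀ m ⊆ ball x₀ ρ := closedBall_subset_ball (mem_ball_iff_norm.1 hp)
  have h₁ : p.1 ∈ closedBall x₀ m := mem_closedBall_iff_norm.2 (norm_fst_le (p - (x₀, x₀)))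
  have h₂ : p.2 ∈ closedBall x₀ m := mem_closedBall_iff_norm.2 (norm_snd_le (p - (x₀, x₀)))
  have hx₀ : x₀ ∈ t := (hball (mem_ball_self hρ)).1
  have key := Convex.norm_image_sub_le_of_norm_hasFDerivWithin_le' (φ := fderiv ℝ f x₀)
    (C := K * m) (fun z hz => (hball (hsub hz)).2.hasFDerivAt.hasFDerivWithinAt)
    (fun z hz => ?_) (convex_closedBall x₀ m) h₂ h₁
  · rwa [Real.norm_of_nonneg (by positivity), ← mul_assoc]
  · rw [← dist_eq_norm]
    exact (hK.dist_le_mul z (hball (hsub hz)).1 x₀ hx₀).trans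
      (mul_le_mul_of_nonneg_left (mem_closedBall.1 hz) K.coe_nonneg)

variable {l : Filter α} {g : α → ℝ}

theorem ContDiffAt.isBigO_comp_sub_sub_fderiv (hf : ContDiffAt ℝ 2 f x₀) {z : α → E}
    (hz : (fun i => z i - x₀) =O[l] g) (hg : Tendsto g l (𝓝 0)) :
    (fun i => f (z i) - f x₀ - fderiv ℝ f x₀ (z i - x₀)) =O[l] fun i => g i ^ 2 := by
  have hz₀ : Tendsto (fun i => (z i, x₀)) l (𝓝 (x₀, x₀)) :=
    (tendsto_sub_nhds_zero_iff.1 (hz.trans_tendsto hg)).prodMk_nhds tendsto_const_nhds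
  refine (hf.isBigO_sub_sub_fderiv_s14.comp_tendsto hz₀).trans
    ((hz.norm_left.mul hz.norm_left).congr (fun i => ?_) fun i => (sq _).symm)
  simp [Prod.norm_def]

theorem ContDiffAt.isBigO_comp_sub_comp_sub_fderiv (hf : ContDiffAt ℝ 2 f x₀)
    {x y X Y : α → E} (hx : (fun i => x i - x₀ - X i) =O[l] fun i => g i ^ 2)
    (hy : (fun i => y i - x₀ - Y i) =O[l] fun i => g i ^ 2) (hX : X =O[l] g) (hY : Y =O[l] g)
    (hg : Tendsto g l (𝓝 0)) :
    (fun i => f (x i) - f (y i) - fderiv ℝ f x₀ (X i - Y i)) =O[l] fun i => g i ^ 2 := by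
  have hg₂ : (fun i => g i ^ 2) =O[l] g := by
    simpa [sq] using (isBigO_refl g l).mul (hg.isBigO_one ℝ)
  have hx₁ : (fun i => x i - x₀) =O[l] g := ((hx.trans hg₂).add hX).congr_left fun i => by abel
  have hy₁ : (fun i => y i - x₀) =O[l] g := ((hy.trans hg₂).add hY).congr_left fun i => by abel
  have hxy : Tendsto (fun i => (x i, y i)) l (𝓝 (x₀, x₀)) :=
    (tendsto_sub_nhds_zero_iff.1 (hx₁.trans_tendsto hg)).prodMk_nhds
      (tendsto_sub_nhds_zero_iff.1 (hy₁.trans_tendsto hg))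
  have hx₁y₁ : (fun i => x i - y i) =O[l] g :=
    (hx₁.sub hy₁).congr_left fun i => sub_sub_sub_cancel_right _ _ _
  have hmain : (fun i => f (x i) - f (y i) - fderiv ℝ f x₀ (x i - y i)) =O[l] fun i => g i ^ 2 :=
    (hf.isBigO_sub_sub_fderiv_s14.comp_tendsto hxy).trans
      (((hx₁.prod_left hy₁).norm_left.mul hx₁y₁.norm_left).congr_right fun i => (sq _).symm)
  have hlin := ((fderiv ℝ f x₀).isBigO_comp _ l).trans (hx.sub hy)
  refine (hmain.add hlin).congr_left fun i => ?_
  simp only [map_sub]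
  abel

theorem contDiff_succ_of_hasDerivAt_comp {G : E → E} {y : ℝ → E} {n : ℕ} (hG : ContDiff ℝ n G)
    (hy : ∀ t, HasDerivAt y (G (y t)) t) : ContDiff ℝ (n + 1) y := by
  have hdiff : Differentiable ℝ y := fun t => (hy t).differentiableAt
  have hderiv : deriv y = G ∘ y := funext fun t => (hy t).deriv
  induction n with
  | zero =>
    exact contDiff_succ_iff_deriv.2
      ⟨hdiff, by simp, hderiv ▸ hG.comp (contDiff_zero.2 hdiff.continuous)⟩
  | succ k ih =>
    exact contDiff_succ_iff_deriv.2
      ⟨hdiff, by simp, hderiv ▸ hG.comp (by exact_mod_cast ih (hG.of_le (by norm_cast; omega)))⟩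

theorem isBigO_sub_sub_smul_of_hasDerivAt_comp {G : E → E} {y : ℝ → E} (hG : ContDiff ℝ 1 G)
    (hy : ∀ t, HasDerivAt y (G (y t)) t) (t₀ : ℝ) :
    (fun s => y (t₀ + s) - y t₀ - s • G (y t₀)) =O[𝓝 0] fun s => s ^ 2 := by
  have hy₂ : ContDiff ℝ 2 y := contDiff_succ_of_hasDerivAt_comp hG hy
  simpa [fderiv_eq_smul_deriv, (hy t₀).deriv] using
    hy₂.contDiffAt.isBigO_comp_sub_sub_fderiv (x₀ := t₀) (z := fun s => t₀ + s) (g := fun s => s)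
      (by simpa using isBigO_refl (fun s : ℝ => s) (𝓝 0)) tendsto_id

theorem fderiv_flow_apply {Φ : ℝ → E → E} {a v : E} (hΦ : HasDerivAt (fun s => Φ s a) v 0)
    (hΦ₀ : ∀ φ, Φ 0 φ = φ) (hd : DifferentiableAt ℝ (fun p : ℝ × E => Φ p.1 p.2) (0, a))
    (w : ℝ × E) : fderiv ℝ (fun p : ℝ × E => Φ p.1 p.2) (0, a) w = w.1 • v + w.2 := by
  set L := fderiv ℝ (fun p : ℝ × E => Φ p.1 p.2) (0, a)
  have hL₁ : L (1, 0) = v := by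
    have h : HasDerivAt (fun s => Φ s a) (L (1, 0)) 0 := by
      exact hd.hasFDerivAt.comp_hasDerivAt (0 : ℝ)
        ((hasDerivAt_id' (0 : ℝ)).prodMk (hasDerivAt_const (0 : ℝ) a))
    exact h.unique hΦ
  have hL₂ : L.comp (.inr ℝ ℝ E) = .id ℝ E := by
    have h := hd.hasFDerivAt.comp a (hasFDerivAt_prodMk_right (0 : ℝ) a)
    rw [show (fun p : ℝ × E => Φ p.1 p.2) ∘ (fun x => ((0 : ℝ), x)) = id from funext hΦ₀] at h
    exact h.unique (hasFDerivAt_id a)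
  calc L w = L (w.1 • (1, 0)) + L.comp (.inr ℝ ℝ E) w.2 := by
        rw [ContinuousLinearMap.comp_apply, ← map_add]; congr 1; ext <;> simp
    _ = w.1 • v + w.2 := by rw [map_smul, hL₁, hL₂]; rfl

theorem isBigO_flow_sub_sub_smul {Φ : ℝ → E → E} {a v : E} (hΦ : HasDerivAt (fun s => Φ s a) v 0)
    (hΦ₀ : ∀ φ, Φ 0 φ = φ) (hsmooth : ContDiffAt ℝ 2 (fun p : ℝ × E => Φ p.1 p.2) (0, a))
    {s : α → ℝ} {φ : α → E} (hs : s =O[l] g) (hφ : (fun i => φ i - a) =O[l] g)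
    (hg : Tendsto g l (𝓝 0)) :
    (fun i => Φ (s i) (φ i) - φ i - s i • v) =O[l] fun i => g i ^ 2 := by
  have h := hsmooth.isBigO_comp_sub_sub_fderiv (z := fun i => (s i, φ i))
    ((hs.prod_left hφ).congr_left fun i => by simp) hg
  refine h.congr_left fun i => ?_
  rw [fderiv_flow_apply hΦ hΦ₀ (hsmooth.differentiableAt (by norm_num)), hΦ₀]
  simp only [Prod.fst_sub, Prod.snd_sub, sub_zero]
  abel

end Taylor

/-- A point is a pair `(Δt, η)`: integrands evaluated at `η ∈ [0, Δt]` are estimated uniformly in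
`η` by big-O statements along this filter. -/
def nhdsSector : Filter (ℝ × ℝ) := 𝓝[{p | |p.2| ≤ |p.1|}] 0

theorem tendsto_fst_nhdsSector : Tendsto Prod.fst nhdsSector (𝓝 0) :=
  (continuous_fst.tendsto' _ _ rfl).mono_left nhdsWithin_le_nhds

theorem isBigO_snd_fst_nhdsSector : Prod.snd =O[nhdsSector] Prod.fst :=
  .of_bound 1 <| eventually_nhdsWithin_of_forall fun p hp => by simpa using hp

theorem tendsto_snd_nhdsSector : Tendsto Prod.snd nhdsSector (𝓝 0) :=
  isBigO_snd_fst_nhdsSector.trans_tendsto tendsto_fst_nhdsSector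

theorem isBigO_intervalIntegral_of_isBigO_nhdsSector {E : Type*} [NormedAddCommGroup E]
    [NormedSpace ℝ E] {F : ℝ → ℝ → E} {n : ℕ}
    (hF : (fun p : ℝ × ℝ => F p.1 p.2) =O[nhdsSector] fun p => p.1 ^ n) :
    (fun h => ∫ η in (0 : ℝ)..h, F h η) =O[𝓝 0] fun h => h ^ (n + 1) := by
  obtain ⟨K, hK⟩ := hF.bound
  obtain ⟨ε, hε, hball⟩ := Metric.mem_nhdsWithin_iff.1 hK
  refine .of_bound K ?_
  filter_upwards [ball_mem_nhds 0 hε] with h hh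
  have hbound : ∀ η ∈ uIoc 0 h, ‖F h η‖ ≤ K * |h| ^ n := fun η hη => by
    have hηh : |η| ≤ |h| := by
      simpa using abs_sub_left_of_mem_uIcc (uIoc_subset_uIcc hη)
    have hmem : (h, η) ∈ ball (0 : ℝ × ℝ) ε := by
      simpa [Prod.norm_def, hηh] using hh
    simpa using hball ⟨hmem, hηh⟩
  calc ‖∫ η in (0 : ℝ)..h, F h η‖ ≤ K * |h| ^ n * |h - 0| :=
        intervalIntegral.norm_integral_le_of_norm_le_const hbound
    _ = K * ‖h ^ (n + 1)‖ := by rw [sub_zero, norm_pow, pow_succ, Real.norm_eq_abs]; ring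

theorem intervalIntegral_sub_sub_sub_mul {f₁ f₂ : ℝ → ℝ} {h : ℝ}
    (hf₁ : IntervalIntegrable f₁ volume 0 h) (hf₂ : IntervalIntegrable f₂ volume 0 h) (k : ℝ) :
    ∫ η in (0 : ℝ)..h, f₁ η - f₂ η - (h - η) * k =
      ((∫ η in (0 : ℝ)..h, f₁ η) - ∫ η in (0 : ℝ)..h, f₂ η) - h ^ 2 / 2 * k := by
  have hlin : ∫ η in (0 : ℝ)..h, h - η = h ^ 2 / 2 := by
    simp [intervalIntegral.integral_comp_sub_left fun η => η]
  rw [intervalIntegral.integral_sub (hf₁.sub hf₂)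
      ((by fun_prop : Continuous fun η => (h - η) * k).intervalIntegrable _ _),
    intervalIntegral.integral_sub hf₁ hf₂, intervalIntegral.integral_mul_const, hlin]

theorem lte_C_revised_three_process_general
    (A B C q qA qB : ℝ → ℝ) (qC : ℝ → ℝ → ℝ) (tn : ℝ)
    (hA : ContDiff ℝ 2 A) (hB : ContDiff ℝ 2 B) (hC : ContDiff ℝ 2 C)
    (hq : ∀ t, HasDerivAt q (A (q t) + B (q t) + C (q t)) t)
    (hqA : ∀ s, HasDerivAt qA (A (qA s)) s)
    (hqB : ∀ s, HasDerivAt qB (B (qB s)) s)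
    (hqA0 : qA 0 = q tn) (hqB0 : qB 0 = q tn)
    (hqC : ∀ φ s, HasDerivAt (fun u => qC u φ) (C (qC s φ)) s)
    (hqC0 : ∀ φ, qC 0 φ = φ)
    (hqCsmooth : ContDiffAt ℝ 2 (fun p : ℝ × ℝ => qC p.1 p.2) (0, q tn)) :
    (fun Δt : ℝ =>
        ((∫ η in (0:ℝ)..Δt,
              C (qC η (q tn + (qA Δt - q tn) + (qB Δt - q tn))))
            - ∫ η in (0:ℝ)..Δt, C (q (tn + η)))
          - Δt ^ 2 / 2 * (deriv C (q tn) * (A (q tn) + B (q tn))))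
      =O[nhds (0:ℝ)] (fun Δt : ℝ => Δt ^ 3) := by
  set a := q tn
  set v := A a + B a
  set ψ : ℝ → ℝ := fun h => a + (qA h - a) + (qB h - a)
  have hfst := tendsto_fst_nhdsSector
  have hsnd := isBigO_snd_fst_nhdsSector
  have hψ₂ : (fun p : ℝ × ℝ => ψ p.1 - a - p.1 * v) =O[nhdsSector] fun p => p.1 ^ 2 :=
    (((isBigO_sub_sub_smul_of_hasDerivAt_comp (hA.of_le one_le_two) hqA 0).add
      (isBigO_sub_sub_smul_of_hasDerivAt_comp (hB.of_le one_le_two) hqB 0)).comp_tendsto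
        hfst).congr_left fun p => by
          simp only [Function.comp_apply, zero_add, smul_eq_mul, hqA0, hqB0, ψ, v]; ring
  have hψ₁ : (fun p : ℝ × ℝ => ψ p.1 - a) =O[nhdsSector] Prod.fst :=
    (((hqA 0).isBigO_sub.add (hqB 0).isBigO_sub).comp_tendsto hfst).congr
      (fun p => by simp only [Function.comp_apply, hqA0, hqB0, ψ]; ring) fun p => sub_zero _
  have hflow := isBigO_flow_sub_sub_smul (s := Prod.snd) (by simpa [hqC0] using hqC a 0) hqC0
    hqCsmooth hsnd hψ₁ hfst
  have hexact := ((isBigO_sub_sub_smul_of_hasDerivAt_comp (G := fun x => A x + B x + C x)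
    (((hA.add hB).add hC).of_le one_le_two) hq tn).comp_tendsto tendsto_snd_nhdsSector).trans
      (hsnd.pow 2)
  have hintegrand := hC.contDiffAt.isBigO_comp_sub_comp_sub_fderiv (x₀ := a)
    (X := fun p : ℝ × ℝ => C a * p.2 + v * p.1) (Y := fun p => (v + C a) * p.2)
    ((hflow.add hψ₂).congr_left fun p => by rw [smul_eq_mul]; ring)
    (hexact.congr_left fun p => by simp only [Function.comp_apply, smul_eq_mul, v]; ring)
    ((hsnd.const_mul_left _).add ((isBigO_refl _ _).const_mul_left _))
    (hsnd.const_mul_left _) hfst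
  refine (isBigO_intervalIntegral_of_isBigO_nhdsSector (n := 2)
    (F := fun h η => C (qC η (ψ h)) - C (q (tn + η)) - (h - η) * (deriv C a * v))
    (hintegrand.congr_left fun p => by rw [fderiv_eq_smul_deriv, smul_eq_mul]; ring)).congr_left
    fun h => ?_
  have hflow_cont : Continuous fun η => qC η (ψ h) :=
    continuous_iff_continuousAt.2 fun s => (hqC (ψ h) s).continuousAt
  have hexact_cont : Continuous q := continuous_iff_continuousAt.2 fun t => (hq t).continuousAt
  exact intervalIntegral_sub_sub_sub_mul ((hC.continuous.comp hflow_cont).intervalIntegrable _ _)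
    ((hC.continuous.comp (hexact_cont.comp (continuous_const_add tn))).intervalIntegrable _ _) _

theorem lte_C_revised_three_process
    (A B C q qA qB : ℝ → ℝ) (qC : ℝ → ℝ → ℝ) (tn : ℝ)
    (hA : ContDiff ℝ 2 A) (hB : ContDiff ℝ 2 B) (hC : ContDiff ℝ 2 C)
    (hq : ∀ t, HasDerivAt q (A (q t) + B (q t) + C (q t)) t)
    (hqA : ∀ s, HasDerivAt qA (A (qA s)) s)
    (hqB : ∀ s, HasDerivAt qB (B (qB s)) s)
    (hqA0 : qA 0 = q tn) (hqB0 : qB 0 = q tn)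
    (hqC : ∀ φ s, HasDerivAt (fun u => qC u φ) (C (qC s φ)) s)
    (hqC0 : ∀ φ, qC 0 φ = φ)
    (hqAsmooth : ContDiffAt ℝ 2 qA 0)
    (hqBsmooth : ContDiffAt ℝ 2 qB 0)
    (hqCsmooth : ContDiffAt ℝ 2 (fun p : ℝ × ℝ => qC p.1 p.2) (0, q tn)) :
    (fun Δt : ℝ =>
        ((∫ η in (0:ℝ)..Δt,
              C (qC η (q tn + (qA Δt - q tn) + (qB Δt - q tn))))
            - ∫ η in (0:ℝ)..Δt, C (q (tn + η)))
          - Δt ^ 2 / 2 * (deriv C (q tn) * (A (q tn) + B (q tn))))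
      =O[nhds (0:ℝ)] (fun Δt : ℝ => Δt ^ 3) :=
  lte_C_revised_three_process_general A B C q qA qB qC tn hA hB hC hq hqA hqB hqA0 hqB0 hqC hqC0
    hqCsmooth
end

section
/- Let A, B, C : ℝ → ℝ be twice continuously differentiable, let tₙ ∈ ℝ, let q : ℝ → ℝ satisfy q′(t) = A(q(t)) + B(q(t)) + C(q(t)) for all t. Let q_A, q_B : ℝ → ℝ satisfy q_A′(s) = A(q_A(s)), q_B′(s) = B(q_B(s)) with q_A(0) = q_B(0) = q(tₙ), and let q_C : ℝ → ℝ → ℝ be the two-parameter flow of C, all with sufficient smoothness near the relevant points. Define the revised update F^{Rev}(Δt) = q_C(Δt, q(tₙ) + (q_A(Δt) − q(tₙ)) + (q_B(Δt) − q(tₙ))). Then F^{Rev}(Δt) − q(tₙ + Δt) = (Δt²/2)·[A′(q(tₙ))·(−B(q(tₙ)) − C(q(tₙ))) + B′(q(tₙ))·(−A(q(tₙ)) − C(q(tₙ))) + C′(q(tₙ))·(A(q(tₙ)) + B(q(tₙ)))] + O(Δt³) as Δt → 0. -/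
/-!
An exact solution of `y' = F y` satisfies
`y x = y 0 + F (y 0) x + F' (y 0) F (y 0) x² / 2 + O(x³)`, since its third derivative
`(F'' F + F'²) F` along the solution is bounded near `0`; for the flow of `C` this bound, and hence
the `O(x³)`, is uniform in the initial value by joint continuity of the flow at `(0, q tₙ)`.
Starting the `C`-flow at the moving point `φ = q tₙ + ΔA + ΔB` adds `C' (φ 0) φ' 0 x²` to
the expansion, and comparing with the exact solution, whose second-order coefficient is
`(A' + B' + C') (A + B + C) / 2`, leaves exactly the stated `Δt²` term.
-/

open Filter Asymptotics Set Topology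

lemma abs_le_mul_abs_pow_succ_of_hasDerivAt {f f' : ℝ → ℝ} {x K : ℝ} {n : ℕ}
    (hK : 0 ≤ K) (hf : ∀ s ∈ uIcc 0 x, HasDerivAt f (f' s) s) (hf0 : f 0 = 0)
    (hf' : ∀ s ∈ uIcc 0 x, |f' s| ≤ K * |s| ^ n) : |f x| ≤ K * |x| ^ (n + 1) := by
  have hbound : ∀ s ∈ uIcc 0 x, ‖f' s‖ ≤ K * |x| ^ n := fun s hs => by
    have hsx : |s| ≤ |x| := by simpa using abs_sub_left_of_mem_uIcc hs
    exact (hf' s hs).trans (by gcongr)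
  have := (convex_uIcc 0 x).norm_image_sub_le_of_norm_hasDerivWithin_le
    (fun s hs => (hf s hs).hasDerivWithinAt) hbound left_mem_uIcc right_mem_uIcc
  simpa [hf0, pow_succ, mul_assoc] using this

lemma uIcc_zero_subset_ball {x δ : ℝ} (hx : x ∈ Metric.ball 0 δ) :
    uIcc 0 x ⊆ Metric.ball 0 δ :=
  (convex_ball 0 δ).ordConnected.uIcc_subset (Metric.mem_ball_self (Metric.pos_of_mem_ball hx)) hx

lemma isBigO_pow_succ_of_hasDerivAt {f f' : ℝ → ℝ} {n : ℕ}
    (hf : ∀ᶠ x in 𝓝 0, HasDerivAt f (f' x) x) (hf0 : f 0 = 0)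
    (hf' : f' =O[𝓝 0] (· ^ n)) : f =O[𝓝 0] (· ^ (n + 1)) := by
  obtain ⟨K, hK, hKf'⟩ := hf'.exists_pos
  obtain ⟨δ, hδ, hball⟩ := Metric.eventually_nhds_iff_ball.mp (hf.and hKf'.bound)
  refine .of_bound K (Metric.eventually_nhds_iff_ball.mpr ⟨δ, hδ, fun x hx => ?_⟩)
  have hsub := uIcc_zero_subset_ball hx
  simpa using abs_le_mul_abs_pow_succ_of_hasDerivAt hK.le (fun s hs => (hball s (hsub hs)).1)
    hf0 fun s hs => by simpa using (hball s (hsub hs)).2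

lemma isBigO_taylor_one_remainder {f f' : ℝ → ℝ}
    (hf : ∀ᶠ x in 𝓝 0, HasDerivAt f (f' x) x) (hf' : DifferentiableAt ℝ f' 0) :
    (fun x => f x - f 0 - f' 0 * x) =O[𝓝 0] (· ^ 2) := by
  refine isBigO_pow_succ_of_hasDerivAt (f' := fun x => f' x - f' 0) ?_ (by simp) ?_
  · filter_upwards [hf] with x hx
    exact ((hx.sub_const (f 0)).sub ((hasDerivAt_id x).const_mul (f' 0))).congr_deriv (by simp)
  · simpa using hf'.isBigO_sub

lemma abs_taylor_two_remainder_le {g g' g'' g''' : ℝ → ℝ} {x M : ℝ}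
    (hg : ∀ s ∈ uIcc 0 x, HasDerivAt g (g' s) s)
    (hg' : ∀ s ∈ uIcc 0 x, HasDerivAt g' (g'' s) s)
    (hg'' : ∀ s ∈ uIcc 0 x, HasDerivAt g'' (g''' s) s)
    (hM : ∀ s ∈ uIcc 0 x, |g''' s| ≤ M) :
    |g x - g 0 - g' 0 * x - g'' 0 * x ^ 2 / 2| ≤ M * |x| ^ 3 := by
  have hM0 : 0 ≤ M := (abs_nonneg _).trans (hM 0 left_mem_uIcc)
  have hsub : ∀ s ∈ uIcc 0 x, uIcc 0 s ⊆ uIcc 0 x :=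
    fun s hs => uIcc_subset_uIcc left_mem_uIcc hs
  have h1 : ∀ s ∈ uIcc 0 x, |g'' s - g'' 0| ≤ M * |s| ^ 1 := fun s hs =>
    abs_le_mul_abs_pow_succ_of_hasDerivAt (n := 0) hM0
      (fun τ hτ => (hg'' τ (hsub s hs hτ)).sub_const _) (sub_self _)
      (by simpa using fun τ hτ => hM τ (hsub s hs hτ))
  have h2 : ∀ s ∈ uIcc 0 x, |g' s - g' 0 - g'' 0 * s| ≤ M * |s| ^ 2 := fun s hs =>
    abs_le_mul_abs_pow_succ_of_hasDerivAt (f := fun s => g' s - g' 0 - g'' 0 * s) hM0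
      (fun τ hτ => ((hg' τ (hsub s hs hτ)).sub_const (g' 0)).sub
          ((hasDerivAt_id τ).const_mul (g'' 0)) |>.congr_deriv (by simp))
      (by simp) (fun τ hτ => h1 τ (hsub s hs hτ))
  refine abs_le_mul_abs_pow_succ_of_hasDerivAt
    (f := fun s => g s - g 0 - g' 0 * s - g'' 0 * s ^ 2 / 2) hM0 (fun s hs => ?_) (by simp) h2
  have hsq : HasDerivAt (fun s => g'' 0 * s ^ 2 / 2) (g'' 0 * s) s := by
    simpa [mul_comm, mul_div_assoc] using ((hasDerivAt_pow 2 s).const_mul (g'' 0)).div_const 2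
  exact (((hg s hs).sub_const (g 0)).sub ((hasDerivAt_id s).const_mul (g' 0))).sub hsq
    |>.congr_deriv (by simp)

/-- Along a solution of `y' = F y`, the third derivative of `y` is `flowThirdDeriv F ∘ y`. -/
noncomputable def flowThirdDeriv (F : ℝ → ℝ) (y : ℝ) : ℝ :=
  (deriv (deriv F) y * F y + deriv F y ^ 2) * F y

lemma continuous_flowThirdDeriv {F : ℝ → ℝ} (hF : ContDiff ℝ 2 F) :
    Continuous (flowThirdDeriv F) := by
  have hF' : ContDiff ℝ 1 (deriv F) := hF.deriv' (n := 1)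
  unfold flowThirdDeriv
  exact ((hF'.continuous_deriv le_rfl).mul hF.continuous |>.add (hF'.continuous.pow 2)).mul
    hF.continuous

lemma abs_ode_taylor_two_remainder_le {F y : ℝ → ℝ} {x M : ℝ} (hF : ContDiff ℝ 2 F)
    (hy : ∀ s ∈ uIcc 0 x, HasDerivAt y (F (y s)) s)
    (hM : ∀ s ∈ uIcc 0 x, |flowThirdDeriv F (y s)| ≤ M) :
    |y x - y 0 - F (y 0) * x - deriv F (y 0) * F (y 0) * x ^ 2 / 2| ≤ M * |x| ^ 3 := by
  have hF' : Differentiable ℝ (deriv F) := (hF.deriv' (n := 1)).differentiable one_ne_zero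
  have hF₁ : Differentiable ℝ F := hF.differentiable two_ne_zero
  refine abs_taylor_two_remainder_le (g'' := fun s => deriv F (y s) * F (y s)) hy
    (fun s hs => ?_) (fun s hs => ?_) hM
  · exact (hF₁ _).hasDerivAt.comp s (hy s hs)
  · have hFy := (hF₁ _).hasDerivAt.comp s (hy s hs)
    exact ((hF' _).hasDerivAt.comp s (hy s hs)).mul hFy |>.congr_deriv (by
      simp only [flowThirdDeriv, Function.comp_apply]; ring)

lemma isBigO_flow_taylor_two_remainder {F : ℝ → ℝ} (hF : ContDiff ℝ 2 F)
    {Φ : ℝ → ℝ → ℝ} (hΦ : ∀ p s, HasDerivAt (fun u => Φ u p) (F (Φ s p)) s)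
    {p₀ : ℝ} (hΦc : ContinuousAt (fun z : ℝ × ℝ => Φ z.1 z.2) (0, p₀))
    {φ : ℝ → ℝ} (hφ : Tendsto φ (𝓝 0) (𝓝 p₀)) :
    (fun x => Φ x (φ x) - Φ 0 (φ x) - F (Φ 0 (φ x)) * x -
      deriv F (Φ 0 (φ x)) * F (Φ 0 (φ x)) * x ^ 2 / 2) =O[𝓝 0] (· ^ 3) := by
  set M := |flowThirdDeriv F (Φ 0 p₀)| + 1
  have hbound : ∀ᶠ z : ℝ × ℝ in 𝓝 (0, p₀), |flowThirdDeriv F (Φ z.1 z.2)| < M :=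
    ((continuous_flowThirdDeriv hF).continuousAt.comp hΦc).abs.eventually_lt continuousAt_const
      (lt_add_one _)
  obtain ⟨δ, hδ, hball⟩ := Metric.eventually_nhds_iff_ball.mp hbound
  have hφδ : ∀ᶠ x in 𝓝 0, dist (φ x) p₀ < δ := hφ (Metric.ball_mem_nhds p₀ hδ)
  refine .of_bound M ?_
  filter_upwards [Metric.ball_mem_nhds (0 : ℝ) hδ, hφδ] with x hx hφx
  simpa using abs_ode_taylor_two_remainder_le hF (fun s _ => hΦ (φ x) s)
    fun s hs => (hball (s, φ x) (by
      rw [Metric.mem_ball, Prod.dist_eq]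
      exact max_lt (uIcc_zero_subset_ball hx hs) hφx)).le

lemma isBigO_ode_taylor_two_remainder {F y : ℝ → ℝ} (hF : ContDiff ℝ 2 F)
    (hy : ∀ s, HasDerivAt y (F (y s)) s) :
    (fun x => y x - y 0 - F (y 0) * x - deriv F (y 0) * F (y 0) * x ^ 2 / 2) =O[𝓝 0] (· ^ 3) :=
  isBigO_flow_taylor_two_remainder (Φ := fun u _ => y u) (p₀ := 0) hF (fun _ => hy)
    ((hy 0).continuousAt.comp (f := Prod.fst) continuousAt_fst) tendsto_const_nhds

lemma isBigO_flow_along_curve_taylor_two_remainder {F : ℝ → ℝ} (hF : ContDiff ℝ 2 F)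
    {Φ : ℝ → ℝ → ℝ} (hΦ : ∀ p s, HasDerivAt (fun u => Φ u p) (F (Φ s p)) s)
    (hΦ0 : ∀ p, Φ 0 p = p)
    {φ φ' : ℝ → ℝ} (hΦc : ContinuousAt (fun z : ℝ × ℝ => Φ z.1 z.2) (0, φ 0))
    (hφ : ∀ᶠ x in 𝓝 0, HasDerivAt φ (φ' x) x) (hφ' : DifferentiableAt ℝ φ' 0) :
    (fun x => Φ x (φ x) - φ x - F (φ 0) * x -
      (deriv F (φ 0) * F (φ 0) + 2 * deriv F (φ 0) * φ' 0) * x ^ 2 / 2)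
      =O[𝓝 0] (· ^ 3) := by
  have hF₁ : Differentiable ℝ F := hF.differentiable two_ne_zero
  have hF' : Differentiable ℝ (deriv F) := (hF.deriv' (n := 1)).differentiable one_ne_zero
  have hφ₀ : DifferentiableAt ℝ φ 0 := hφ.self_of_nhds.differentiableAt
  have hflow := isBigO_flow_taylor_two_remainder hF hΦ hΦc hφ₀.continuousAt
  simp only [hΦ0] at hflow
  have hFφ : (fun x => F (φ x) - F (φ 0) - deriv F (φ 0) * φ' 0 * x) =O[𝓝 0] (· ^ 2) :=
    isBigO_taylor_one_remainder
      (hφ.mono fun x hx => (hF₁ _).hasDerivAt.comp x hx)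
      (((hF' _).comp 0 hφ₀).mul hφ')
  have hF'Fφ : (fun x => deriv F (φ x) * F (φ x) - deriv F (φ 0) * F (φ 0))
      =O[𝓝 0] (· ^ 1) := by
    simpa using (((hF' _).comp 0 hφ₀).mul ((hF₁ _).comp 0 hφ₀)).isBigO_sub
  have hx2 : (fun x : ℝ => x ^ 2 / 2) =O[𝓝 0] (· ^ 2) :=
    (isBigO_refl _ _).const_mul_left (1 / 2) |>.congr_left fun x => by ring
  have hlin : (fun x => x * (F (φ x) - F (φ 0) - deriv F (φ 0) * φ' 0 * x))
      =O[𝓝 0] (· ^ 3) :=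
    ((isBigO_refl (· ^ 1) _).mul hFφ).congr (fun x => by ring) fun x => by ring
  have hquad : (fun x => x ^ 2 / 2 * (deriv F (φ x) * F (φ x) - deriv F (φ 0) * F (φ 0)))
      =O[𝓝 0] (· ^ 3) :=
    (hx2.mul hF'Fφ).congr_right fun x => by ring
  exact (hflow.add (hlin.add hquad)).congr_left fun x => by ring

theorem revised_scheme_local_truncation_error_general
    (A B C q qA qB : ℝ → ℝ) (qC : ℝ → ℝ → ℝ) (tn : ℝ)
    (hA : ContDiff ℝ 2 A) (hB : ContDiff ℝ 2 B) (hC : ContDiff ℝ 2 C)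
    (hq : ∀ t, HasDerivAt q (A (q t) + B (q t) + C (q t)) t)
    (hqA : ∀ s, HasDerivAt qA (A (qA s)) s)
    (hqB : ∀ s, HasDerivAt qB (B (qB s)) s)
    (hqA0 : qA 0 = q tn) (hqB0 : qB 0 = q tn)
    (hqC : ∀ φ s, HasDerivAt (fun u => qC u φ) (C (qC s φ)) s)
    (hqC0 : ∀ φ, qC 0 φ = φ)
    (hqCsmooth : ContDiffAt ℝ 2 (fun p : ℝ × ℝ => qC p.1 p.2) (0, q tn)) :
    (fun Δt : ℝ =>
        (qC Δt (q tn + (qA Δt - q tn) + (qB Δt - q tn)) - q (tn + Δt))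
          - Δt ^ 2 / 2 *
              (deriv A (q tn) * (-B (q tn) - C (q tn))
                + deriv B (q tn) * (-A (q tn) - C (q tn))
                + deriv C (q tn) * (A (q tn) + B (q tn))))
      =O[nhds (0:ℝ)] (fun Δt : ℝ => Δt ^ 3) := by
  have hA₁ := hA.differentiable two_ne_zero
  have hB₁ := hB.differentiable two_ne_zero
  have hC₁ := hC.differentiable two_ne_zero
  have hexact := isBigO_ode_taylor_two_remainder (y := fun s => q (tn + s)) (hA.add hB |>.add hC)
    fun s => (hq (tn + s)).comp_const_add tn s
  have hflow := isBigO_flow_along_curve_taylor_two_remainder hC hqC hqC0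
    (φ := fun x => q tn + (qA x - q tn) + (qB x - q tn)) (φ' := fun x => A (qA x) + B (qB x))
    (by simpa [hqA0, hqB0] using hqCsmooth.continuousAt)
    (.of_forall fun x => ((hqA x).sub_const _ |>.const_add _).add ((hqB x).sub_const _))
    (((hA₁ _).comp 0 (hqA 0).differentiableAt).add ((hB₁ _).comp 0 (hqB 0).differentiableAt))
  have hderiv : deriv (fun y => A y + B y + C y) (q tn) =
      deriv A (q tn) + deriv B (q tn) + deriv C (q tn) :=
    (((hA₁ _).hasDerivAt.add (hB₁ _).hasDerivAt).add (hC₁ _).hasDerivAt).deriv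
  have hsplit := (hflow.add ((isBigO_ode_taylor_two_remainder hA hqA).add
    (isBigO_ode_taylor_two_remainder hB hqB))).sub hexact
  simp only [hqA0, hqB0, hderiv, add_zero, sub_self] at hsplit
  exact hsplit.congr_left fun x => by ring

theorem revised_scheme_local_truncation_error
    (A B C q qA qB : ℝ → ℝ) (qC : ℝ → ℝ → ℝ) (tn : ℝ)
    (hA : ContDiff ℝ 2 A) (hB : ContDiff ℝ 2 B) (hC : ContDiff ℝ 2 C)
    (hq : ∀ t, HasDerivAt q (A (q t) + B (q t) + C (q t)) t)
    (hqA : ∀ s, HasDerivAt qA (A (qA s)) s)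
    (hqB : ∀ s, HasDerivAt qB (B (qB s)) s)
    (hqA0 : qA 0 = q tn) (hqB0 : qB 0 = q tn)
    (hqC : ∀ φ s, HasDerivAt (fun u => qC u φ) (C (qC s φ)) s)
    (hqC0 : ∀ φ, qC 0 φ = φ)
    (hqAsmooth : ContDiffAt ℝ 2 qA 0)
    (hqBsmooth : ContDiffAt ℝ 2 qB 0)
    (hqCsmooth : ContDiffAt ℝ 2 (fun p : ℝ × ℝ => qC p.1 p.2) (0, q tn)) :
    (fun Δt : ℝ =>
        (qC Δt (q tn + (qA Δt - q tn) + (qB Δt - q tn)) - q (tn + Δt))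
          - Δt ^ 2 / 2 *
              (deriv A (q tn) * (-B (q tn) - C (q tn))
                + deriv B (q tn) * (-A (q tn) - C (q tn))
                + deriv C (q tn) * (A (q tn) + B (q tn))))
      =O[nhds (0:ℝ)] (fun Δt : ℝ => Δt ^ 3) :=
  revised_scheme_local_truncation_error_general A B C q qA qB qC tn hA hB hC hq hqA hqB hqA0 hqB0
    hqC hqC0 hqCsmooth
end
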